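/- Let n > 0 and σ ∈ ℝ. Then the curve α(t) = (cos 2σt, −sin 2σt, 0), β(t) = (−sin 2σt, −cos 2σt, 0), M(t) = (0, 0, 2σ) is a solution of the system dM/dt = M×ω + e₁×α + e₂×β, dα/dt = α×ω, dβ/dt = β×ω with ω = M I⁻¹, I = diag(n,n,1); along it α×β ≡ −e₃, H = (1/2)(n(ω₁² + ω₂²) + ω₃²) − α₁ − β₂ ≡ 2σ², L = n(ω₁γ₁ + ω₂γ₂) + ω₃(γ₃ − 1) ≡ −4σ (γ = α×β), and in particular H = L²/8, so the values of (L, H) along this family fill the parabola h = ℓ²/8. -/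

import Mathlib

/-!
In body coordinates `α` and `β` are the space-fixed vectors `e₁` and `-e₂` seen from a frame
turning uniformly about `e₃`, i.e. `α = rotZ (-2σt) e₁` and `β = rotZ (-2σt) (-e₂)`, while
`M = ω = 2σ e₃`. Such vectors satisfy Poisson's equation `ẋ = x × ω`; rotations commute with
the cross product and fix `e₃`, so `γ = rotZ (-2σt) (e₁ × -e₂) = -e₃`; and `dM/dt = 0` because
`M ∥ ω` and the torques `e₁ × α`, `e₂ × β` cancel. The values of `H` and `L` are then read off.
-/

open Matrix Real

theorem Matrix.vecMul_inv_diagonal {ι K : Type*} [Fintype ι] [DecidableEq ι] [Field K]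
    {d : ι → K} (hd : ∀ i, d i ≠ 0) (v : ι → K) : v ᵥ* (diagonal d)⁻¹ = v / d := by
  have hinv : (diagonal d)⁻¹ = diagonal d⁻¹ :=
    inv_eq_right_inv <| by
      rw [diagonal_mul_diagonal, ← diagonal_one]
      exact congrArg diagonal (funext fun i => mul_inv_cancel₀ (hd i))
  ext i
  simp [hinv, vecMul_diagonal, div_eq_mul_inv]

noncomputable def rotZ (θ : ℝ) (v : Fin 3 → ℝ) : Fin 3 → ℝ :=
  ![v 0 * cos θ - v 1 * sin θ, v 0 * sin θ + v 1 * cos θ, v 2]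

theorem rotZ_axis (θ z : ℝ) : rotZ θ ![0, 0, z] = ![0, 0, z] := by
  simp [rotZ]

theorem rotZ_cross (θ : ℝ) (u v : Fin 3 → ℝ) : rotZ θ u ⨯₃ rotZ θ v = rotZ θ (u ⨯₃ v) := by
  ext i
  fin_cases i <;>
    simp only [rotZ, cross_apply, Fin.zero_eta, Fin.mk_one, Fin.reduceFinMk, cons_val_zero,
      cons_val_one, cons_val]
  · ring
  · ring
  · linear_combination (u 0 * v 1 - u 1 * v 0) * sin_sq_add_cos_sq θ

theorem hasDerivAt_rotZ_neg_mul (w : ℝ) (v : Fin 3 → ℝ) (t : ℝ) :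
    HasDerivAt (fun t => rotZ (-(w * t)) v) (rotZ (-(w * t)) v ⨯₃ ![0, 0, w]) t := by
  have hθ : HasDerivAt (fun t => -(w * t)) (-w) t :=
    ((hasDerivAt_id t).const_mul w).neg.congr_deriv (by simp)
  rw [hasDerivAt_pi]
  intro i
  fin_cases i <;>
    simp only [rotZ, cross_apply, Fin.zero_eta, Fin.mk_one, Fin.reduceFinMk, cons_val]
  · convert (hθ.cos.const_mul (v 0)).fun_sub (hθ.sin.const_mul (v 1)) using 1
    ring
  · convert (hθ.sin.const_mul (v 0)).fun_add (hθ.cos.const_mul (v 1)) using 1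
    ring
  · simpa using hasDerivAt_const t (v 2)

/-- For every `σ`, the curve `α = (cos 2σt, −sin 2σt, 0)`,
`β = (−sin 2σt, −cos 2σt, 0)`, `M = (0, 0, 2σ)` (uniform rotation about the
third axis of inertia) solves the equations of motion; along it `α×β ≡ −e₃`,
`H ≡ 2σ²`, `L ≡ −4σ`, and in particular `H = L²/8`, so the values `(L, H)`
fill the parabola `h = ℓ²/8`. -/
theorem uniform_rotations
    (n σ : ℝ) (hn : 0 < n)
    (α β M ω γ : ℝ → Fin 3 → ℝ)
    (hA : ∀ t, α t = ![cos (2 * σ * t), -sin (2 * σ * t), 0])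
    (hB : ∀ t, β t = ![-sin (2 * σ * t), -cos (2 * σ * t), 0])
    (hM : ∀ t, M t = ![0, 0, 2 * σ])
    (hω : ∀ t, ω t = M t ᵥ* (Matrix.diagonal ![n, n, 1])⁻¹)
    (hγ : ∀ t, γ t = α t ⨯₃ β t) :
    (∀ t, HasDerivAt M
        (M t ⨯₃ ω t + (![1, 0, 0] : Fin 3 → ℝ) ⨯₃ α t
          + (![0, 1, 0] : Fin 3 → ℝ) ⨯₃ β t) t
      ∧ HasDerivAt α (α t ⨯₃ ω t) t
      ∧ HasDerivAt β (β t ⨯₃ ω t) t)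
    ∧ (∀ t, γ t = ![0, 0, -1])
    ∧ (∀ t, (1 / 2) * (n * (ω t 0 ^ 2 + ω t 1 ^ 2) + ω t 2 ^ 2) - α t 0 - β t 1
              = 2 * σ ^ 2)
    ∧ (∀ t, n * (ω t 0 * γ t 0 + ω t 1 * γ t 1) + ω t 2 * (γ t 2 - 1) = -4 * σ)
    ∧ (2 * σ ^ 2 = (-4 * σ) ^ 2 / 8) := by
  have hω_const (t : ℝ) : ω t = ![0, 0, 2 * σ] := by
    rw [hω, hM, vecMul_inv_diagonal (by simp [Fin.forall_fin_succ, hn.ne'])]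
    ext i
    fin_cases i <;> simp
  have hα : α = fun t => rotZ (-(2 * σ * t)) ![1, 0, 0] := by
    ext t i
    fin_cases i <;> simp [hA, rotZ]
  have hβ : β = fun t => rotZ (-(2 * σ * t)) ![0, -1, 0] := by
    ext t i
    fin_cases i <;> simp [hB, rotZ]
  have hγ_const (t : ℝ) : γ t = ![0, 0, -1] := by
    have he : (![1, 0, 0] ⨯₃ ![0, -1, 0] : Fin 3 → ℝ) = ![0, 0, -1] := by
      simp [cross_apply]
    rw [hγ, hα, hβ, rotZ_cross, he, rotZ_axis]
  refine ⟨fun t => ⟨?_, ?_, ?_⟩, hγ_const, fun t => ?_, fun t => ?_, by ring⟩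
  · have hM' : HasDerivAt M 0 t := by
      simpa [funext hM] using hasDerivAt_const t ![0, 0, 2 * σ]
    convert hM' using 1
    ext i
    fin_cases i <;> simp [hM, hω_const, hA, hB, cross_apply]
  · rw [hω_const, hα]
    exact hasDerivAt_rotZ_neg_mul (2 * σ) _ t
  · rw [hω_const, hβ]
    exact hasDerivAt_rotZ_neg_mul (2 * σ) _ t
  · rw [hω_const, hA, hB]
    simp only [cons_val_zero, cons_val_one, cons_val]
    ring
  · rw [hω_const, hγ_const]
    simp only [cons_val_zero, cons_val_one, cons_val]
    ring
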